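/- arXiv:1502.03280 — 3 statements merged into one kernel-verified Lean document; each statement's English description precedes it below -/
import Mathlib

section
/- For all nonnegative integers a, b, c, d, the binomial coefficient C(a+b+c+d+2, a+b+1) equals the sum over pairs (i,j) with i+j=b of C(a+c+i+1, c) * C(j+d, d), plus the sum over pairs (i,j) with i+j=d of C(a+c+i+1, a) * C(j+b, b). -/
/-!
As functions of `(b, d)`, both sides satisfy Pascal's recurrence
`F (b + 1) (d + 1) = F b (d + 1) + F (b + 1) d`: the left side by Pascal's rule, each sum on
the right because `C(j + d + 1, d + 1) = C(j + d, d) + C((j - 1) + d + 1, d + 1)`. So it suffices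
to check the edges `b = 0` and `d = 0`, where one sum collapses to a single term and the
identity becomes a hockey-stick sum.
-/

open Finset

theorem Nat.choose_succ_add_sum_range_add_choose (n k b : ℕ) :
    n.choose (k + 1) + ∑ i ∈ range b, (n + i).choose k = (n + b).choose (k + 1) := by
  induction b with
  | zero => simp
  | succ b ih => rw [sum_range_succ, ← add_assoc, ih, ← add_assoc, Nat.choose_succ_succ', add_comm]

theorem Nat.sum_antidiagonal_choose_add_choose (m k b : ℕ) :
    ∑ p ∈ antidiagonal b, (m + p.1 + 1).choose k + (m + 1).choose (k + 1) =
      (m + b + 2).choose (k + 1) := by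
  rw [Nat.sum_antidiagonal_eq_sum_range_succ_mk, add_comm, show m + b + 2 = m + 1 + (b + 1) by ring,
    ← Nat.choose_succ_add_sum_range_add_choose (m + 1) k (b + 1)]
  exact congrArg _ (sum_congr rfl fun i _ => by rw [add_right_comm])

theorem Nat.sum_antidiagonal_mul_choose_succ (f : ℕ → ℕ) (b d : ℕ) :
    ∑ p ∈ antidiagonal (b + 1), f p.1 * (p.2 + (d + 1)).choose (d + 1) =
      ∑ p ∈ antidiagonal (b + 1), f p.1 * (p.2 + d).choose d +
        ∑ p ∈ antidiagonal b, f p.1 * (p.2 + (d + 1)).choose (d + 1) := by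
  calc _ = ∑ p ∈ antidiagonal (b + 1), f p.1 * (p.2 + d).choose d +
        ∑ p ∈ antidiagonal (b + 1), f p.1 * (p.2 + d).choose (d + 1) := by
          rw [← sum_add_distrib]
          exact sum_congr rfl fun p _ => by rw [← add_assoc, Nat.choose_succ_succ', mul_add]
    _ = _ := by
      congr 1
      rw [Nat.sum_antidiagonal_succ']
      simp [add_right_comm _ 1 d, ← add_assoc]

theorem eq_of_pascal_rec {α : Type*} [Add α] {F G : ℕ → ℕ → α}
    (hF : ∀ b d, F (b + 1) (d + 1) = F b (d + 1) + F (b + 1) d)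
    (hG : ∀ b d, G (b + 1) (d + 1) = G b (d + 1) + G (b + 1) d)
    (h_left : ∀ d, F 0 d = G 0 d) (h_bottom : ∀ b, F b 0 = G b 0) (b d : ℕ) :
    F b d = G b d := by
  induction b generalizing d with
  | zero => exact h_left d
  | succ b ihb =>
    induction d with
    | zero => exact h_bottom _
    | succ d ihd => rw [hF, hG, ihb, ihd]

/-- For all nonnegative integers `a b c d`,
`C(a+b+c+d+2, a+b+1) = Σ_{i+j=b} C(a+c+i+1, c) * C(j+d, d) + Σ_{i+j=d} C(a+c+i+1, a) * C(j+b, b)`. -/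
theorem binomial_identity_two (a b c d : ℕ) :
    (a + b + c + d + 2).choose (a + b + 1) =
      (∑ p ∈ Finset.HasAntidiagonal.antidiagonal b, (a + c + p.1 + 1).choose c * (p.2 + d).choose d) +
      (∑ p ∈ Finset.HasAntidiagonal.antidiagonal d, (a + c + p.1 + 1).choose a * (p.2 + b).choose b) := by
  refine eq_of_pascal_rec (F := fun b d => (a + b + c + d + 2).choose (a + b + 1))
    (G := fun b d => (∑ p ∈ antidiagonal b, (a + c + p.1 + 1).choose c * (p.2 + d).choose d) +
      ∑ p ∈ antidiagonal d, (a + c + p.1 + 1).choose a * (p.2 + b).choose b) ?_ ?_ ?_ ?_ b d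
  · intro b d
    have h := Nat.choose_succ_succ' (a + b + c + d + 3) (a + b + 1)
    ring_nf at h ⊢
    omega
  · intro b d
    have hf := Nat.sum_antidiagonal_mul_choose_succ (fun i => (a + c + i + 1).choose c) b d
    have hg := Nat.sum_antidiagonal_mul_choose_succ (fun i => (a + c + i + 1).choose a) d b
    rw [hf, hg]
    ring
  · intro d
    simp only [add_zero, HasAntidiagonal.antidiagonal_zero, sum_singleton, zero_add, Nat.choose_self,
      mul_one, Nat.choose_zero_right]
    rw [Nat.choose_symm_of_eq_add (show a + c + 1 = c + (a + 1) by ring),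
      add_comm ((a + c + 1).choose (a + 1)),
      Nat.sum_antidiagonal_choose_add_choose]
  · intro b
    simp only [add_zero, HasAntidiagonal.antidiagonal_zero, sum_singleton, zero_add, Nat.choose_self,
      mul_one, Nat.choose_zero_right]
    rw [Nat.choose_symm_of_eq_add (show a + c + 1 = a + (c + 1) by ring),
      Nat.sum_antidiagonal_choose_add_choose,
      Nat.choose_symm_of_eq_add (show a + b + c + 2 = a + b + 1 + (c + 1) by ring),
      add_right_comm a b c]
end

section
/- In the free pre-Lie algebra on two generators a, b, realized as the span of (isomorphism classes of) rooted trees with vertices labelled by a and b, with the grafting pre-Lie product, the n-th symmetric brace {a; b,…,b} (with n copies of b) equals the corolla with root vertex labelled a and n top vertices labelled b. -/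
/-- Rooted trees with vertices labelled by elements of `X`, realizing the free pre-Lie
algebra on the set of generators `X` (Chapoton–Livernet). -/
inductive LTree (X : Type) : Type
  | node : X → List (LTree X) → LTree X

variable {K : Type} [Field K] {X : Type}

/-- Grafting: `graftL t s` is the sum over all vertices `v` of `t` of the labelled tree
obtained by grafting the root of `s` onto `v`. -/
noncomputable def graftL : LTree X → LTree X → (LTree X →₀ K)
  | .node x l, s => Finsupp.single (.node x (l ++ [s])) 1 +
      ∑ i ∈ (Finset.range l.length).attach,
        Finsupp.mapDomain (fun u => LTree.node x (l.set i.1 u))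
          (graftL (l.getD i.1 (.node x [])) s)
  termination_by t _ => sizeOf t
  decreasing_by
    have hi : i.1 < l.length := Finset.mem_range.mp i.2
    rw [List.getD_eq_getElem _ _ hi]
    have := List.sizeOf_lt_of_mem (l.getElem_mem hi)
    simp only [LTree.node.sizeOf_spec]; omega

/-- The pre-Lie grafting product on the free pre-Lie algebra, i.e. on the span of
labelled rooted trees, extended bilinearly. -/
noncomputable def preLieStar (f g : LTree X →₀ K) : LTree X →₀ K :=
  f.sum fun t a => g.sum fun s b => (a * b) • graftL t s

/-- Symmetric braces `{a; b₁,…,bₙ}` in the free pre-Lie algebra, defined recursively by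
`{a;} = a`, `{a; b₁} = a ⋆ b₁` and
`{a; b₁,…,bₙ} = {{a; b₁,…,b_{n−1}}; bₙ} − Σᵢ {a; b₁,…,{bᵢ; bₙ},…,b_{n−1}}`
(the head of the list is the last argument `bₙ`). -/
noncomputable def braceL : (LTree X →₀ K) → List (LTree X →₀ K) → (LTree X →₀ K)
  | a, [] => a
  | a, c :: l => preLieStar (braceL a l) c -
      ∑ i ∈ Finset.range l.length, braceL a (l.set i (preLieStar (l.getD i a) c))
  termination_by _ bs => bs.length
  decreasing_by all_goals simp [List.length_set]

/-- The corolla with root vertex labelled `a` and `n` top vertices labelled `b`. -/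
def corolla (a b : X) (n : ℕ) : LTree X :=
  LTree.node a (List.replicate n (LTree.node b []))


lemma graftL_node (x : X) (l : List (LTree X)) (s : LTree X) :
    graftL (LTree.node x l) s = Finsupp.single (LTree.node x (l ++ [s])) (1:K) +
      ∑ i ∈ (Finset.range l.length).attach,
        Finsupp.mapDomain (fun u => LTree.node x (l.set i.1 u))
          (graftL (l.getD i.1 (.node x [])) s) := by
  rw [graftL]

lemma braceL_cons (a c : LTree X →₀ K) (l : List (LTree X →₀ K)) :
    braceL a (c :: l) = preLieStar (braceL a l) c -
      ∑ i ∈ Finset.range l.length, braceL a (l.set i (preLieStar (l.getD i a) c)) := by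
  rw [braceL]

lemma braceL_nil (a : LTree X →₀ K) : braceL a [] = a := by rw [braceL]

lemma preLieStar_single_single (t s : LTree X) :
    preLieStar (Finsupp.single t (1:K)) (Finsupp.single s 1) = graftL t s := by
  unfold preLieStar
  rw [Finsupp.sum_single_index, Finsupp.sum_single_index] <;> simp [Finsupp.sum]

lemma preLieStar_smul_add_left (β : K) (x y c : LTree X →₀ K) :
    preLieStar (β • x + y) c = β • preLieStar x c + preLieStar y c := by
  unfold preLieStar
  rw [Finsupp.sum_add_index' (fun t => by simp [Finsupp.sum])
      (fun t b1 b2 => by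
        rw [← Finsupp.sum_add]
        exact Finsupp.sum_congr fun s _ => by rw [← add_smul, add_mul])]
  congr 1
  rw [Finsupp.sum_smul_index (fun t => by simp [Finsupp.sum]), Finsupp.smul_sum]
  exact Finsupp.sum_congr fun t _ => by
    rw [Finsupp.smul_sum]
    exact Finsupp.sum_congr fun s _ => by rw [smul_smul, mul_assoc]

lemma preLieStar_smul_add_right (β : K) (x y c : LTree X →₀ K) :
    preLieStar c (β • x + y) = β • preLieStar c x + preLieStar c y := by
  unfold preLieStar
  rw [Finsupp.smul_sum, ← Finsupp.sum_add]
  refine Finsupp.sum_congr fun t _ => ?_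
  rw [Finsupp.sum_add_index' (fun s => by simp)
      (fun s b1 b2 => by rw [← add_smul, mul_add])]
  congr 1
  rw [Finsupp.sum_smul_index (fun s => by simp), Finsupp.smul_sum]
  exact Finsupp.sum_congr fun s _ => by rw [smul_smul, mul_left_comm]

lemma braceL_set_smul_add (a0 : LTree X →₀ K) :
    ∀ n (l : List (LTree X →₀ K)), l.length = n → ∀ i, i < n → ∀ (β : K) (x y : LTree X →₀ K),
      braceL a0 (l.set i (β • x + y)) =
        β • braceL a0 (l.set i x) + braceL a0 (l.set i y) := by
  intro n
  induction n using Nat.strong_induction_on with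
  | _ n IH =>
    intro l hl i hi β x y
    match l, i with
    | [], i => simp at hl; omega
    | c :: l', 0 =>
      simp only [List.set_cons_zero]
      rw [braceL_cons, braceL_cons, braceL_cons, preLieStar_smul_add_right]
      have hsum : ∀ j ∈ Finset.range l'.length,
          braceL a0 (l'.set j (preLieStar (l'.getD j a0) (β • x + y)))
          = β • braceL a0 (l'.set j (preLieStar (l'.getD j a0) x))
            + braceL a0 (l'.set j (preLieStar (l'.getD j a0) y)) := by
        intro j hj
        rw [preLieStar_smul_add_right]
        exact IH l'.length (by simp at hl; omega) l' rfl j (Finset.mem_range.mp hj) β _ _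
      rw [Finset.sum_congr rfl hsum, Finset.sum_add_distrib, ← Finset.smul_sum]
      module
    | c :: l', (i + 1) =>
      have hn : l'.length < n := by simp at hl; omega
      have hi' : i < l'.length := by simp at hl; omega
      simp only [List.set_cons_succ]
      rw [braceL_cons, braceL_cons, braceL_cons,
        IH l'.length hn l' rfl i hi' β x y, preLieStar_smul_add_left]
      simp only [List.length_set]
      have hsum : ∀ j ∈ Finset.range l'.length,
          braceL a0 ((l'.set i (β • x + y)).set j
              (preLieStar ((l'.set i (β • x + y)).getD j a0) c))
          = β • braceL a0 ((l'.set i x).set j (preLieStar ((l'.set i x).getD j a0) c))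
            + braceL a0 ((l'.set i y).set j (preLieStar ((l'.set i y).getD j a0) c)) := by
        intro j hj
        have hj' : j < l'.length := Finset.mem_range.mp hj
        by_cases hij : j = i
        · subst hij
          have hg : ∀ z : LTree X →₀ K, (l'.set j z).getD j a0 = z := fun z => by
            rw [List.getD_eq_getElem _ _ (by simp; omega), List.getElem_set_self]
          simp only [hg, List.set_set]
          rw [preLieStar_smul_add_left]
          exact IH l'.length hn l' rfl j hj' β _ _
        · have hg : ∀ z : LTree X →₀ K, (l'.set i z).getD j a0 = l'.getD j a0 := fun z => by
            rw [List.getD_eq_getElem _ _ (by simp; omega),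
              List.getElem_set_ne (fun h => hij h.symm), ← List.getD_eq_getElem _ _ hj']
          simp only [hg]
          rw [List.set_comm _ _ (fun h => hij h.symm),
            List.set_comm x _ (l := l') (fun h => hij h.symm),
            List.set_comm y _ (l := l') (fun h => hij h.symm)]
          exact IH l'.length hn _ (by simp) i (by simp [hi']) β _ _
      rw [Finset.sum_congr rfl hsum, Finset.sum_add_distrib, ← Finset.smul_sum]
      module

lemma braceL_set_zero (a0 : LTree X →₀ K) (l : List (LTree X →₀ K)) (i : ℕ)
    (hi : i < l.length) : braceL a0 (l.set i (0 : LTree X →₀ K)) = 0 := by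
  have h := braceL_set_smul_add a0 l.length l rfl i hi 1 0 0
  simp only [smul_zero, add_zero, one_smul] at h
  exact (right_eq_add.mp h).symm ▸ rfl

lemma braceL_set_add (a0 : LTree X →₀ K) (l : List (LTree X →₀ K)) (i : ℕ)
    (hi : i < l.length) (x y : LTree X →₀ K) :
    braceL a0 (l.set i (x + y)) = braceL a0 (l.set i x) + braceL a0 (l.set i y) := by
  have h := braceL_set_smul_add a0 l.length l rfl i hi 1 x y
  simpa using h

lemma braceL_set_smul (a0 : LTree X →₀ K) (l : List (LTree X →₀ K)) (i : ℕ)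
    (hi : i < l.length) (β : K) (x : LTree X →₀ K) :
    braceL a0 (l.set i (β • x)) = β • braceL a0 (l.set i x) := by
  have h := braceL_set_smul_add a0 l.length l rfl i hi β x 0
  simpa [braceL_set_zero a0 l i hi] using h

lemma braceL_set_sum (a0 : LTree X →₀ K) (l : List (LTree X →₀ K)) (i : ℕ)
    (hi : i < l.length) (g : LTree X →₀ K) :
    braceL a0 (l.set i g) =
      g.sum fun t β => β • braceL a0 (l.set i (Finsupp.single t 1)) := by
  induction g using Finsupp.induction_linear with
  | zero => simp [braceL_set_zero a0 l i hi, Finsupp.sum_zero_index]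
  | add f g hf hg =>
      rw [braceL_set_add a0 l i hi, hf, hg,
        Finsupp.sum_add_index' (fun t => by simp) (fun t b1 b2 => by rw [add_smul])]
  | single t β =>
      rw [Finsupp.sum_single_index (by simp)]
      have : Finsupp.single t β = β • Finsupp.single t (1 : K) := by
        rw [Finsupp.smul_single, smul_eq_mul, mul_one]
      rw [this, braceL_set_smul a0 l i hi]

lemma reverse_set {α : Type*} (l : List α) (i : ℕ) (hi : i < l.length) (t : α) :
    (l.set i t).reverse = l.reverse.set (l.length - 1 - i) t := by
  apply List.ext_getElem (by simp)
  intro j h1 h2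
  have hj : j < l.length := by simpa using h1
  rw [List.getElem_reverse]
  simp only [List.getElem_set, List.getElem_reverse, List.length_set]
  split_ifs <;> first | rfl | omega

lemma getD_reverse {α : Type*} (l : List α) (i : ℕ) (hi : i < l.length) (d : α) :
    l.reverse.getD (l.length - 1 - i) d = l.getD i d := by
  rw [List.getD_eq_getElem _ _ (by simp; omega), List.getD_eq_getElem _ _ hi,
    List.getElem_reverse]
  congr 1
  omega

lemma braceL_map_single (a : X) :
    ∀ n (m : List (LTree X)), m.length = n →
      braceL (Finsupp.single (LTree.node a []) (1:K))
          (m.map fun t => Finsupp.single t 1)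
        = Finsupp.single (LTree.node a m.reverse) 1 := by
  intro n
  induction n using Nat.strong_induction_on with
  | _ n IH =>
    intro m hm
    match m with
    | [] => rw [List.map_nil, braceL_nil]; rfl
    | c :: m' =>
      have hlen : m'.length < n := by simp at hm; omega
      simp only [List.map_cons]
      rw [braceL_cons, IH m'.length hlen m' rfl, preLieStar_single_single,
        graftL_node, Finset.sum_attach (Finset.range m'.reverse.length)
          (fun i => Finsupp.mapDomain (fun u => LTree.node a (m'.reverse.set i u))
            (graftL (m'.reverse.getD i (LTree.node a [])) c))]
      simp only [List.length_reverse, List.length_map]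
      have key : ∀ j ∈ Finset.range m'.length,
          braceL (Finsupp.single (LTree.node a []) (1:K))
            ((m'.map fun t => Finsupp.single t (1:K)).set j
              (preLieStar ((m'.map fun t => Finsupp.single t (1:K)).getD j
                (Finsupp.single (LTree.node a []) 1)) (Finsupp.single c 1)))
          = Finsupp.mapDomain
              (fun u => LTree.node a (m'.reverse.set (m'.length - 1 - j) u))
              (graftL (m'.reverse.getD (m'.length - 1 - j) (LTree.node a [])) c) := by
        intro j hj
        have hj' : j < m'.length := Finset.mem_range.mp hj
        have hget : (m'.map fun t => Finsupp.single t (1:K)).getD j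
            (Finsupp.single (LTree.node a []) 1)
            = Finsupp.single (m'.getD j (LTree.node a [])) 1 := by
          rw [List.getD_eq_getElem _ _ (by simpa using hj'), List.getElem_map,
            List.getD_eq_getElem _ _ hj']
        rw [hget, preLieStar_single_single,
          braceL_set_sum _ _ j (by simpa using hj'),
          getD_reverse m' j hj', Finsupp.mapDomain]
        refine Finsupp.sum_congr fun t _ => ?_
        rw [show ((m'.map fun t => Finsupp.single t (1:K)).set j (Finsupp.single t 1))
            = (m'.set j t).map (fun t => Finsupp.single t (1:K)) from List.map_set.symm,
          IH m'.length hlen _ (by simp), ← reverse_set m' j hj']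
        simp [Finsupp.smul_single]
      rw [Finset.sum_congr rfl key,
        Finset.sum_range_reflect (fun i => Finsupp.mapDomain
          (fun u => LTree.node a (m'.reverse.set i u))
          (graftL (m'.reverse.getD i (LTree.node a [])) c)) m'.length,
        add_sub_cancel_right, List.reverse_cons]

/-- In the free pre-Lie algebra on two generators `a, b`, realized as
the span of labelled rooted trees with the grafting pre-Lie product, the `n`-th
symmetric brace `{a; b,…,b}` (with `n` copies of `b`) equals the corolla with root
vertex labelled `a` and `n` top vertices labelled `b`. -/
theorem brace_replicate_eq_corolla {K : Type} [Field K] [CharZero K] {X : Type}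
    (a b : X) (n : ℕ) :
    braceL (Finsupp.single (LTree.node a []) (1 : K))
        (List.replicate n (Finsupp.single (LTree.node b []) (1 : K))) =
      Finsupp.single (corolla a b n) (1 : K) := by
  have h := braceL_map_single (K := K) a (List.replicate n (LTree.node b [])).length
    (List.replicate n (LTree.node b [])) rfl
  simpa [List.map_replicate, List.reverse_replicate, corolla] using h
end

section
/- In a complete weight-graded left-unital pre-Lie algebra, the identity a ⊚ (1+b; (1+b)⋆c) = (a ⊚ (1+b)) ⋆ c holds, where a ⊚ (1+b; c) := Σ_{n≥0} (1/n!) {a; b,…,b, c} (n copies of b). -/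
open Finset

/-- The weight-`i` component of an element of a complete weight-graded space
`A = ∏_{n} A^{(n)}`, encoded as a dependent function. -/
def wtComp {M : ℕ → Type*} [∀ n, AddCommGroup (M n)] (i : ℕ) (f : ∀ n, M n) :
    ∀ n, M n :=
  fun m => if m = i then f m else 0

/-- A complete weight-graded algebra `A ≅ ∏_{n≥0} A^{(n)}` over `K`, with a bilinear
product `⋆` such that `A^{(n)} ⋆ A^{(m)} ⊆ A^{(n+m)}`, and a unit `1 ∈ A^{(0)}`.
The underlying space is `∀ n, M n`, i.e. the product of the weight components. -/
structure CompleteGradedAlg (K : Type*) [Field K] (M : ℕ → Type*)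
    [∀ n, AddCommGroup (M n)] [∀ n, Module K (M n)] where
  star : (∀ n, M n) → (∀ n, M n) → (∀ n, M n)
  one : ∀ n, M n
  add_left : ∀ f g h, star (f + g) h = star f h + star g h
  add_right : ∀ f g h, star f (g + h) = star f g + star f h
  smul_left : ∀ (c : K) f g, star (c • f) g = c • star f g
  smul_right : ∀ (c : K) f g, star f (c • g) = c • star f g
  /-- the product is determined by its values on weight components (completeness) -/
  grade : ∀ f g n, star f g n =
    ∑ p ∈ Finset.HasAntidiagonal.antidiagonal n, star (wtComp p.1 f) (wtComp p.2 g) n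
  /-- `A^{(i)} ⋆ A^{(j)} ⊆ A^{(i+j)}` -/
  wt : ∀ f g i j n, n ≠ i + j → star (wtComp i f) (wtComp j g) n = 0
  /-- the unit is concentrated in weight `0` -/
  one_wt : ∀ n, n ≠ 0 → one n = 0

namespace CompleteGradedAlg

variable {K : Type*} [Field K] {M : ℕ → Type*}
  [∀ n, AddCommGroup (M n)] [∀ n, Module K (M n)]

variable (S : CompleteGradedAlg K M)

/-- Right-iterated powers with base `a`: `powPos a k = a^{⋆(k+1)} = (⋯(a⋆a)⋆⋯)⋆a`. -/
def powPos (a : ∀ n, M n) : ℕ → ∀ n, M n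
  | 0 => a
  | k + 1 => S.star (powPos a k) a

/-- The exponential `e^λ = 1 + λ + λ^{⋆2}/2! + ⋯` of an element `λ` of positive weight;
its weight-`n` component is the (finite) sum of the weight-`n` components of the terms. -/
def expS (l : ∀ n, M n) : ∀ n, M n :=
  fun n => S.one n + ∑ k ∈ Finset.range n, ((Nat.factorial (k + 1) : K)⁻¹) • S.powPos l k n

/-- The logarithm `ln(1+a) = a - a^{⋆2}/2 + a^{⋆3}/3 - ⋯` of a group-like element `1+a`. -/
def logS (f : ∀ n, M n) : ∀ n, M n :=
  fun n => ∑ k ∈ Finset.range n,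
    (((-1 : K) ^ k) / (k + 1 : K)) • S.powPos (f - S.one) k n

/-- The symmetric brace operations `{a; b₁, …, bₙ}` of a pre-Lie algebra, defined
recursively by `{a;} = a`, `{a; b₁} = a ⋆ b₁` and
`{a; b₁,…,bₙ} = {{a; b₁,…,b_{n-1}}; bₙ} - Σᵢ {a; b₁,…,{bᵢ; bₙ},…,b_{n-1}}`.
Here the head of the list plays the role of the last argument `bₙ`. -/
def brace : (∀ n, M n) → List (∀ n, M n) → ∀ n, M n
  | a, [] => a
  | a, c :: l => S.star (brace a l) c -
      ∑ i ∈ Finset.range l.length, brace a (l.set i (S.star (l.getD i a) c))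
  termination_by _ bs => bs.length
  decreasing_by all_goals simp [List.length_set]

/-- The circle product `a ⊚ (1+b) := Σ_{k≥0} (1/k!) {a; b,…,b}` (sum of symmetric
braces); `b` is the reduced (positive-weight) part of the group-like second argument. -/
def circOne (a b : ∀ n, M n) : ∀ n, M n :=
  fun n => ∑ k ∈ Finset.range (n + 1),
    ((Nat.factorial k : K)⁻¹) • S.brace a (List.replicate k b) n

/-- The circle product of `a` with a group-like element `x`. -/
def circG (a x : ∀ n, M n) : ∀ n, M n := S.circOne a (x - S.one)

end CompleteGradedAlg

/-- The mixed circle product `a ⊚ (1+b; c) := Σ_{k≥0} (1/k!){a; b,…,b, c}`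
(`k` copies of `b` and one extra argument `c`). -/
def CompleteGradedAlg.circMix {K : Type*} [Field K]
    {M : ℕ → Type*} [∀ n, AddCommGroup (M n)] [∀ n, Module K (M n)]
    (S : CompleteGradedAlg K M) (a b c : ∀ n, M n) : ∀ n, M n :=
  fun n => ∑ k ∈ Finset.range (n + 1),
    ((Nat.factorial k : K)⁻¹) • S.brace a (c :: List.replicate k b) n


/-!
Since `(1+b)⋆c = c + b⋆c` and braces are additive in each argument, the `k`-th summand on the
left is `{a; bᵏ, c} + {a; bᵏ, b⋆c}`. The braces are symmetric (this is where the pre-Lie identity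
enters), so expanding `{a; bᵏ, c}` by its defining recursion gives
`{a; bᵏ} ⋆ c - k {a; bᵏ⁻¹, b⋆c}`. Weighted by `1/k!`, the `b⋆c` terms telescope, and in weight
`n` the only survivor `{a; bⁿ, b⋆c}/n!` vanishes because all its `n + 1` arguments have positive
weight.
-/

namespace List

variable {α : Type*}

theorem getD_set_self {l : List α} {i : ℕ} (h : i < l.length) (v d : α) :
    (l.set i v).getD i d = v := by
  simp [getD_eq_getElem?_getD, h]

theorem getD_set_of_ne {l : List α} {i j : ℕ} (h : i ≠ j) (v d : α) :
    (l.set i v).getD j d = l.getD j d := by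
  simp [getD_eq_getElem?_getD, getElem?_set_ne h]

theorem set_replicate {k i : ℕ} (h : i < k) (b x : α) :
    (replicate k b).set i x = replicate i b ++ x :: replicate (k - 1 - i) b := by
  induction i generalizing k with
  | zero => obtain ⟨k, rfl⟩ := Nat.exists_eq_add_of_lt h; simp [replicate_succ]
  | succ i ih =>
    obtain ⟨k, rfl⟩ := Nat.exists_eq_add_of_lt h
    rw [show i + 1 + k + 1 = (i + k + 1) + 1 by omega, replicate_succ, set_cons_succ,
      ih (by omega), replicate_succ, cons_append]
    congr 4
    omega

theorem sum_set_add_getD {β : Type*} [AddCommMonoid β] {l : List β} {i : ℕ} (h : i < l.length)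
    (x : β) : (l.set i x).sum + l.getD i 0 = l.sum + x := by
  induction l generalizing i with
  | nil => simp at h
  | cons y l ih =>
    cases i with
    | zero => simp only [set_cons_zero, sum_cons, getD_cons_zero]; abel
    | succ i =>
      simp only [set_cons_succ, sum_cons, getD_cons_succ, add_assoc, ih (by simpa using h)]

theorem Forall₂.getD {β : Type*} {R : α → β → Prop} {l₁ : List α} {l₂ : List β}
    (h : Forall₂ R l₁ l₂) {d₁ : α} {d₂ : β} (hd : R d₁ d₂) (i : ℕ) :
    R (l₁.getD i d₁) (l₂.getD i d₂) := by
  induction h generalizing i with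
  | nil => exact hd
  | cons hxy _ ih => cases i with
    | zero => exact hxy
    | succ i => exact ih i

theorem Forall₂.set {β : Type*} {R : α → β → Prop} {l₁ : List α} {l₂ : List β}
    (h : Forall₂ R l₁ l₂) {x : α} {y : β} (hxy : R x y) (i : ℕ) :
    Forall₂ R (l₁.set i x) (l₂.set i y) := by
  induction h generalizing i with
  | nil => exact .nil
  | cons hab _ ih => cases i with
    | zero => exact .cons hxy ‹_›
    | succ i => exact .cons hab (ih i)

theorem sum_range_set_append {β : Type*} [AddCommMonoid β] (g : List α → β) (φ : α → α) (d : α)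
    (l₁ l₂ : List α) :
    ∑ m ∈ Finset.range (l₁ ++ l₂).length, g ((l₁ ++ l₂).set m (φ ((l₁ ++ l₂).getD m d))) =
      ∑ m ∈ Finset.range l₁.length, g (l₁.set m (φ (l₁.getD m d)) ++ l₂) +
      ∑ m ∈ Finset.range l₂.length, g (l₁ ++ l₂.set m (φ (l₂.getD m d))) := by
  rw [length_append, Finset.sum_range_add]
  congr 1
  · refine Finset.sum_congr rfl fun m hm => ?_
    have hm : m < l₁.length := Finset.mem_range.1 hm
    rw [getD_append _ _ _ _ hm, set_append_left _ _ hm]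
  · refine Finset.sum_congr rfl fun m _ => ?_
    rw [getD_append_right _ _ _ _ (by omega), set_append_right _ _ (by omega),
      Nat.add_sub_cancel_left]

end List

theorem sum_range_inv_factorial_smul_sub_nsmul {K V : Type*} [Field K] [CharZero K]
    [AddCommGroup V] [Module K V] (u : ℕ → V) (n : ℕ) :
    ∑ k ∈ range (n + 1), (k.factorial : K)⁻¹ • (u k - k • u (k - 1)) =
      (n.factorial : K)⁻¹ • u n := by
  induction n with
  | zero => simp
  | succ n ih =>
    have hfac : ((n + 1).factorial : K)⁻¹ • ((n + 1) • u n) = (n.factorial : K)⁻¹ • u n := by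
      rw [← Nat.cast_smul_eq_nsmul K, smul_smul, Nat.factorial_succ, Nat.cast_mul, mul_inv,
        mul_comm _ (n.factorial : K)⁻¹, mul_assoc,
        inv_mul_cancel₀ (Nat.cast_ne_zero.2 n.succ_ne_zero), mul_one]
    rw [sum_range_succ, ih, Nat.add_sub_cancel, smul_sub, hfac, add_sub_cancel]

namespace CompleteGradedAlg

variable {K : Type*} [Field K] {M : ℕ → Type*} [∀ n, AddCommGroup (M n)] [∀ n, Module K (M n)]
  (S : CompleteGradedAlg K M)

theorem star_zero_left (g : ∀ n, M n) : S.star 0 g = 0 :=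
  map_zero (AddMonoidHom.mk' (S.star · g) (S.add_left · · g))

theorem star_zero_right (f : ∀ n, M n) : S.star f 0 = 0 :=
  map_zero (AddMonoidHom.mk' (S.star f) (S.add_right f))

theorem star_sub_left (f f' g : ∀ n, M n) : S.star (f - f') g = S.star f g - S.star f' g :=
  map_sub (AddMonoidHom.mk' (S.star · g) (S.add_left · · g)) f f'

theorem star_sum_left {ι : Type*} (s : Finset ι) (f : ι → ∀ n, M n) (g : ∀ n, M n) :
    S.star (∑ i ∈ s, f i) g = ∑ i ∈ s, S.star (f i) g :=
  map_sum (AddMonoidHom.mk' (S.star · g) (S.add_left · · g)) f s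

theorem star_apply_congr_left {f f' : ∀ n, M n} (g : ∀ n, M n) {n : ℕ}
    (h : ∀ p ≤ n, f p = f' p) : S.star f g n = S.star f' g n := by
  rw [S.grade, S.grade]
  refine sum_congr rfl fun q hq => ?_
  have hq : q.1 ≤ n := by rw [HasAntidiagonal.mem_antidiagonal] at hq; omega
  have hcomp : wtComp q.1 f = wtComp q.1 f' := by
    funext m
    unfold wtComp
    split_ifs with hm
    · rw [hm, h _ hq]
    · rfl
  rw [hcomp]

def VanishesBelow (m : ℕ) (f : ∀ n, M n) : Prop := ∀ p < m, f p = 0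

theorem vanishesBelow_zero (f : ∀ n, M n) : VanishesBelow 0 f := fun p hp => absurd hp p.not_lt_zero

theorem vanishesBelow_one_iff {f : ∀ n, M n} : VanishesBelow 1 f ↔ f 0 = 0 :=
  ⟨fun h => h 0 one_pos, fun h _ hp => Nat.lt_one_iff.1 hp ▸ h⟩

theorem VanishesBelow.wtComp_eq_zero {m : ℕ} {f : ∀ n, M n} (hf : VanishesBelow m f) {i : ℕ}
    (hi : i < m) : wtComp i f = 0 := by
  funext p
  by_cases hp : p = i
  · subst hp; simp only [wtComp, if_true, hf _ hi, Pi.zero_apply]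
  · simp only [wtComp, hp, if_false, Pi.zero_apply]

theorem VanishesBelow.star {i j : ℕ} {f g : ∀ n, M n} (hf : VanishesBelow i f)
    (hg : VanishesBelow j g) : VanishesBelow (i + j) (S.star f g) := by
  intro n hn
  rw [S.grade]
  refine sum_eq_zero fun q hq => ?_
  rw [HasAntidiagonal.mem_antidiagonal] at hq
  rcases lt_or_ge q.1 i with hq1 | hq1
  · rw [hf.wtComp_eq_zero hq1, S.star_zero_left, Pi.zero_apply]
  · rw [hg.wtComp_eq_zero (by omega : q.2 < j), S.star_zero_right, Pi.zero_apply]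

theorem brace_cons (a c : ∀ n, M n) (l : List (∀ n, M n)) :
    S.brace a (c :: l) = S.star (S.brace a l) c -
      ∑ i ∈ range l.length, S.brace a (l.set i (S.star (l.getD i a) c)) := by
  rw [brace]

theorem brace_set_add (a : ∀ n, M n) (l : List (∀ n, M n)) {i : ℕ} (hi : i < l.length)
    (x y : ∀ n, M n) :
    S.brace a (l.set i (x + y)) = S.brace a (l.set i x) + S.brace a (l.set i y) := by
  induction a, l using brace.induct S generalizing i x y with
  | case1 => simp at hi
  | case2 a c t ih ihset =>
    cases i with
    | zero =>
      simp only [List.set_cons_zero, brace_cons, S.add_right]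
      rw [sum_congr rfl fun j hj => ih (mem_range.1 hj) _ _, sum_add_distrib]
      abel
    | succ j =>
      have hj : j < t.length := by simpa using hi
      have hset : ∀ z, ∀ m ∈ range t.length,
          (t.set j z).set m (S.star ((t.set j z).getD m a) c) =
            if m = j then t.set j (S.star z c) else (t.set m (S.star (t.getD m a) c)).set j z := by
        intro z m _
        split_ifs with hm
        · rw [hm, List.getD_set_self hj, List.set_set]
        · rw [List.getD_set_of_ne (Ne.symm hm), List.set_comm _ _ hm]
      have hterm : ∀ m ∈ range t.length,
          S.brace a ((t.set j (x + y)).set m (S.star ((t.set j (x + y)).getD m a) c)) =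
            S.brace a ((t.set j x).set m (S.star ((t.set j x).getD m a) c)) +
            S.brace a ((t.set j y).set m (S.star ((t.set j y).getD m a) c)) := by
        intro m hm
        rw [hset _ m hm, hset _ m hm, hset _ m hm]
        split_ifs with hmj
        · rw [S.add_left, ih hj]
        · exact ihset m (by simpa using hj) x y
      simp only [List.set_cons_succ, brace_cons, List.length_set, ih hj, S.add_left,
        sum_congr rfl hterm, sum_add_distrib]
      abel

theorem brace_cons_add (a x y : ∀ n, M n) (l : List (∀ n, M n)) :
    S.brace a ((x + y) :: l) = S.brace a (x :: l) + S.brace a (y :: l) :=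
  S.brace_set_add a (x :: l) (Nat.succ_pos _) x y

theorem vanishesBelow_brace (a : ∀ n, M n) (l : List (∀ n, M n)) {ws : List ℕ}
    (hws : List.Forall₂ VanishesBelow ws l) : VanishesBelow ws.sum (S.brace a l) := by
  induction a, l using brace.induct S generalizing ws with
  | case1 => cases hws; intro p hp; simp at hp
  | case2 a c t ih ihset =>
    rcases hws with _ | @⟨w, _, vs, _, hc, hvs⟩
    intro p hp
    rw [List.sum_cons] at hp
    have hterm : ∀ i ∈ range t.length, S.brace a (t.set i (S.star (t.getD i a) c)) p = 0 := by
      intro i hi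
      have hi : i < vs.length := hvs.length_eq ▸ mem_range.1 hi
      refine ihset i (ws := vs.set i (vs.getD i 0 + w)) ?_ p ?_
      · exact hvs.set ((hvs.getD (vanishesBelow_zero a) i).star S hc) i
      · have := List.sum_set_add_getD hi (vs.getD i 0 + w)
        omega
    rw [brace_cons, Pi.sub_apply, Finset.sum_apply, sum_eq_zero hterm, sub_zero]
    rw [add_comm] at hp
    exact (ih hvs).star S hc p hp

theorem brace_apply_eq_zero_of_lt_length (a : ∀ n, M n) {l : List (∀ n, M n)}
    (hl : ∀ x ∈ l, x 0 = 0) {p : ℕ} (hp : p < l.length) : S.brace a l p = 0 := by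
  have hws : List.Forall₂ VanishesBelow (l.map fun _ => 1) l :=
    List.forall₂_map_left_iff.2 <|
      List.forall₂_same.2 fun x hx => vanishesBelow_one_iff.2 (hl x hx)
  exact S.vanishesBelow_brace a l hws p (by simpa using hp)

theorem star_circOne_apply {b : ∀ n, M n} (hb : b 0 = 0) (a c : ∀ n, M n) (n : ℕ) :
    S.star (S.circOne a b) c n =
      ∑ k ∈ range (n + 1), (k.factorial : K)⁻¹ • S.star (S.brace a (List.replicate k b)) c n := by
  have htrunc : ∀ p ≤ n, S.circOne a b p =
      (∑ k ∈ range (n + 1), (k.factorial : K)⁻¹ • S.brace a (List.replicate k b)) p := by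
    intro p hp
    rw [circOne, Finset.sum_apply]
    refine sum_subset (range_subset_range.2 (by omega)) fun k hk hkp => ?_
    have hpk : p < (List.replicate k b).length := by
      simp only [mem_range, not_lt, List.length_replicate] at hk hkp ⊢
      omega
    rw [S.brace_apply_eq_zero_of_lt_length a
      (fun x hx => List.eq_of_mem_replicate hx ▸ hb) hpk, smul_zero]
  rw [S.star_apply_congr_left c htrunc, S.star_sum_left, Finset.sum_apply]
  exact sum_congr rfl fun k _ => by rw [S.smul_left, Pi.smul_apply]

/-- Grouped so that, given the pre-Lie identity, each of the four summands is visibly symmetric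
in `u` and `v`. -/
theorem brace_cons_cons (a u v : ∀ n, M n) (t : List (∀ n, M n)) :
    S.brace a (u :: v :: t) =
      (S.star (S.star (S.brace a t) v) u - S.star (S.brace a t) (S.star v u))
      - (∑ j ∈ range t.length, S.star (S.brace a (t.set j (S.star (t.getD j a) v))) u
        + ∑ j ∈ range t.length, S.star (S.brace a (t.set j (S.star (t.getD j a) u))) v)
      + ∑ j ∈ range t.length,
          S.brace a (t.set j (S.star (S.star (t.getD j a) u) v + S.star (t.getD j a) (S.star v u)))
      + ∑ i ∈ range t.length, ∑ m ∈ (range t.length).erase i,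
          S.brace a ((t.set i (S.star (t.getD i a) u)).set m (S.star (t.getD m a) v)) := by
  have hinner : ∀ i ∈ range t.length, S.brace a (v :: t.set i (S.star (t.getD i a) u)) =
      S.star (S.brace a (t.set i (S.star (t.getD i a) u))) v
        - (∑ m ∈ (range t.length).erase i,
            S.brace a ((t.set i (S.star (t.getD i a) u)).set m (S.star (t.getD m a) v))
          + S.brace a (t.set i (S.star (S.star (t.getD i a) u) v))) := by
    intro i hi
    rw [brace_cons, List.length_set, ← sum_erase_add _ _ hi, List.set_set,
      List.getD_set_self (mem_range.1 hi)]
    congr 2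
    refine sum_congr rfl fun m hm => ?_
    rw [List.getD_set_of_ne (Ne.symm (mem_erase.1 hm).1)]
  have hsplit : ∀ j ∈ range t.length,
      S.brace a (t.set j (S.star (S.star (t.getD j a) u) v + S.star (t.getD j a) (S.star v u))) =
        S.brace a (t.set j (S.star (S.star (t.getD j a) u) v))
        + S.brace a (t.set j (S.star (t.getD j a) (S.star v u))) :=
    fun j hj => S.brace_set_add a t (mem_range.1 hj) _ _
  rw [S.brace_cons a u (v :: t), S.brace_cons a v t, S.star_sub_left, S.star_sum_left,
    List.length_cons, sum_range_succ']
  simp only [List.set_cons_succ, List.getD_cons_succ, List.set_cons_zero, List.getD_cons_zero]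
  rw [S.brace_cons a (S.star v u) t, sum_congr rfl hinner, sum_congr rfl hsplit,
    sum_sub_distrib, sum_add_distrib, sum_add_distrib]
  abel

def IsPreLie : Prop :=
  ∀ x y z, S.star (S.star x y) z - S.star x (S.star y z) =
    S.star (S.star x z) y - S.star x (S.star z y)

variable {S}

theorem IsPreLie.star_star_add_star_star (hS : S.IsPreLie) (x u v : ∀ n, M n) :
    S.star (S.star x u) v + S.star x (S.star v u) = S.star (S.star x v) u + S.star x (S.star u v) :=
  sub_eq_sub_iff_add_eq_add.1 (hS x u v)

theorem IsPreLie.brace_cons_cons_comm (hS : S.IsPreLie) (a u v : ∀ n, M n)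
    (t : List (∀ n, M n)) : S.brace a (u :: v :: t) = S.brace a (v :: u :: t) := by
  rw [S.brace_cons_cons, S.brace_cons_cons, hS (S.brace a t) v u,
    add_comm (∑ j ∈ range t.length, S.star (S.brace a (t.set j (S.star (t.getD j a) v))) u)]
  congr 1
  · congr 1
    exact sum_congr rfl fun j _ => by rw [hS.star_star_add_star_star]
  · rw [sum_comm' (t' := range t.length) (s' := fun m => (range t.length).erase m)
      fun i m => by simp only [mem_range, mem_erase]; omega]
    exact sum_congr rfl fun m _ => sum_congr rfl fun i hi => by
      rw [List.set_comm _ _ (mem_erase.1 hi).1]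

theorem IsPreLie.brace_append_cons_cons_comm (hS : S.IsPreLie) (a x y : ∀ n, M n)
    (l₁ l₂ : List (∀ n, M n)) :
    S.brace a (l₁ ++ x :: y :: l₂) = S.brace a (l₁ ++ y :: x :: l₂) := by
  induction hn : l₁.length generalizing l₁ x y l₂ with
  | zero => rw [List.length_eq_zero_iff.1 hn]; exact hS.brace_cons_cons_comm a x y l₂
  | succ n ih =>
    obtain ⟨c, l₁, rfl⟩ := List.exists_cons_of_length_eq_add_one hn
    have hn : l₁.length = n := by simpa using hn
    rw [List.cons_append, List.cons_append, S.brace_cons, S.brace_cons, ih _ _ _ _ hn,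
      List.sum_range_set_append (S.brace a) (S.star · c) a,
      List.sum_range_set_append (S.brace a) (S.star · c) a]
    congr 2
    · exact sum_congr rfl fun m _ => ih _ _ _ _ (by rw [List.length_set, hn])
    · simp only [List.length_cons, sum_range_succ', List.set_cons_succ, List.getD_cons_succ,
        List.set_cons_zero, List.getD_cons_zero]
      rw [sum_congr rfl fun m _ => ih x y l₁ (l₂.set m (S.star (l₂.getD m a) c)) hn,
        ih x (S.star y c) l₁ l₂ hn, ih (S.star x c) y l₁ l₂ hn]
      abel

theorem IsPreLie.brace_replicate_append_cons (hS : S.IsPreLie) (a b x : ∀ n, M n)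
    (l : List (∀ n, M n)) (i : ℕ) :
    S.brace a (List.replicate i b ++ x :: l) = S.brace a (x :: (List.replicate i b ++ l)) := by
  induction i generalizing l with
  | zero => rfl
  | succ i ih =>
    rw [List.replicate_succ', List.append_assoc, List.singleton_append,
      hS.brace_append_cons_cons_comm, ih, List.append_assoc, List.singleton_append]

theorem IsPreLie.brace_set_replicate (hS : S.IsPreLie) (a b x : ∀ n, M n) {i k : ℕ}
    (h : i < k) :
    S.brace a ((List.replicate k b).set i x) = S.brace a (x :: List.replicate (k - 1) b) := by
  rw [List.set_replicate h, hS.brace_replicate_append_cons, ← List.replicate_add,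
    Nat.add_sub_of_le (by omega : i ≤ k - 1)]

theorem IsPreLie.brace_cons_replicate (hS : S.IsPreLie) (a b w : ∀ n, M n) (k : ℕ) :
    S.brace a (w :: List.replicate k b) =
      S.star (S.brace a (List.replicate k b)) w
        - k • S.brace a (S.star b w :: List.replicate (k - 1) b) := by
  have hterm : ∀ i ∈ range k,
      S.brace a ((List.replicate k b).set i (S.star ((List.replicate k b).getD i a) w)) =
        S.brace a (S.star b w :: List.replicate (k - 1) b) := fun i hi => by
    rw [List.getD_replicate _ (mem_range.1 hi), hS.brace_set_replicate _ _ _ (mem_range.1 hi)]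
  rw [S.brace_cons, List.length_replicate, sum_congr rfl hterm, sum_const, card_range]

end CompleteGradedAlg

theorem circMix_identity_general {K : Type*} [Field K] [CharZero K]
    {M : ℕ → Type*} [∀ n, AddCommGroup (M n)] [∀ n, Module K (M n)]
    (S : CompleteGradedAlg K M)
    (hPreLie : ∀ x y z, S.star (S.star x y) z - S.star x (S.star y z) =
      S.star (S.star x z) y - S.star x (S.star z y))
    (hUnitL : ∀ f, S.star S.one f = f)
    (a b c : ∀ n, M n) (hb : b 0 = 0) :
    S.circMix a b (S.star (S.one + b) c) = S.star (S.circOne a b) c := by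
  have hS : S.IsPreLie := hPreLie
  set d := S.star b c
  have hd : d 0 = 0 := CompleteGradedAlg.vanishesBelow_one_iff.1 <|
    (CompleteGradedAlg.vanishesBelow_one_iff.2 hb).star S (CompleteGradedAlg.vanishesBelow_zero c)
  have hterm : ∀ k, S.brace a (S.star (S.one + b) c :: List.replicate k b) =
      S.star (S.brace a (List.replicate k b)) c +
        (S.brace a (d :: List.replicate k b) - k • S.brace a (d :: List.replicate (k - 1) b)) := by
    intro k
    rw [S.add_left, hUnitL, S.brace_cons_add, hS.brace_cons_replicate]
    abel
  funext n
  have htop : S.brace a (d :: List.replicate n b) n = 0 :=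
    S.brace_apply_eq_zero_of_lt_length a
      (fun x hx => (List.mem_cons.1 hx).elim (· ▸ hd) (List.eq_of_mem_replicate · ▸ hb))
      (by simp)
  simp only [CompleteGradedAlg.circMix, hterm, Pi.add_apply, Pi.sub_apply, Pi.smul_apply,
    smul_add, sum_add_distrib, S.star_circOne_apply hb,
    sum_range_inv_factorial_smul_sub_nsmul (fun k => S.brace a (d :: List.replicate k b) n), htop,
    smul_zero, add_zero]

/-- In a complete weight-graded left-unital pre-Lie algebra (over a
field of characteristic zero), for `b, c` of trivial weight-0 component one has
`a ⊚ (1+b; (1+b)⋆c) = (a ⊚ (1+b)) ⋆ c`. -/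
theorem circMix_identity {K : Type*} [Field K] [CharZero K]
    {M : ℕ → Type*} [∀ n, AddCommGroup (M n)] [∀ n, Module K (M n)]
    (S : CompleteGradedAlg K M)
    (hPreLie : ∀ x y z, S.star (S.star x y) z - S.star x (S.star y z) =
      S.star (S.star x z) y - S.star x (S.star z y))
    (hUnitL : ∀ f, S.star S.one f = f)
    (a b c : ∀ n, M n) (hb : b 0 = 0) (hc : c 0 = 0) :
    S.circMix a b (S.star (S.one + b) c) = S.star (S.circOne a b) c :=
  circMix_identity_general S hPreLie hUnitL a b c hb
end
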